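/- arXiv:2306.03945 — 4 statements merged into one kernel-verified Lean document; each statement's English description precedes it below -/
import Mathlib

section
/- Let k > 0 be a real number and define f(x) = tan(kx) − k·tanh(x). Then f is strictly increasing on each interval of (0, ∞) where tan(kx) is defined, f(x) > 0 for x ∈ (0, π/(2k)), f(x) < 0 for x ∈ (π/(2k), π/k], and f has a unique root in the interval (π/k, 3π/(2k)). -/
/-!
With `f x = tan (k x) - k tanh x`, `f' x = k / cos² (k x) - k / cosh² x > 0` for `x ≠ 0`, because
`cos² ≤ 1 < cosh²` there; so `f` increases on every interval of `[0, ∞)` avoiding the poles of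
`tan (k x)`. Then `f 0 = 0` gives positivity on `(0, π/(2k))`, and on the branch
`(π/(2k), 3π/(2k))` the values `f (π/k) = -k tanh (π/k) < 0` and
`f ((π + arctan k)/k) = k (1 - tanh _) > 0` give, by monotonicity and the intermediate value
theorem, negativity on `(π/(2k), π/k]` and a single root in `(π/k, 3π/(2k))`.
-/

open Set

namespace Real

theorem hasDerivAt_tanh (x : ℝ) : HasDerivAt tanh (1 / cosh x ^ 2) x := by
  rw [show tanh = fun y => sinh y / cosh y from funext tanh_eq_sinh_div_cosh]
  refine ((hasDerivAt_sinh x).div (hasDerivAt_cosh x) (cosh_pos x).ne').congr_deriv ?_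
  rw [← cosh_sq_sub_sinh_sq x]
  ring

theorem tanh_pos {x : ℝ} (hx : 0 < x) : 0 < tanh x := by
  rw [tanh_eq_sinh_div_cosh]
  exact div_pos (sinh_pos_iff.2 hx) (cosh_pos x)

end Real

open Real

noncomputable def tanSubTanh (k x : ℝ) : ℝ := tan (k * x) - k * tanh x

section

variable {k : ℝ}

theorem hasDerivAt_tanSubTanh {x : ℝ} (hx : cos (k * x) ≠ 0) :
    HasDerivAt (tanSubTanh k) (k / cos (k * x) ^ 2 - k / cosh x ^ 2) x := by
  have hkx : HasDerivAt (fun t => tan (k * t)) (1 / cos (k * x) ^ 2 * k) x :=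
    (hasDerivAt_tan hx).comp x (by simpa using (hasDerivAt_id x).const_mul k)
  exact (hkx.sub ((hasDerivAt_tanh x).const_mul k)).congr_deriv (by ring)

theorem continuousOn_tanSubTanh {s : Set ℝ} (hcos : ∀ z ∈ s, cos (k * z) ≠ 0) :
    ContinuousOn (tanSubTanh k) s :=
  fun z hz => (hasDerivAt_tanSubTanh (hcos z hz)).continuousAt.continuousWithinAt

theorem deriv_tanSubTanh_pos (hk : 0 < k) {x : ℝ} (hx : x ≠ 0) (hcos : cos (k * x) ≠ 0) :
    0 < k / cos (k * x) ^ 2 - k / cosh x ^ 2 := by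
  have hcosh : k / cosh x ^ 2 < k := div_lt_self hk (one_lt_pow₀ (one_lt_cosh.2 hx) two_ne_zero)
  have hcos : k ≤ k / cos (k * x) ^ 2 := le_div_self hk.le (sq_pos_of_ne_zero hcos) (cos_sq_le_one _)
  linarith

theorem strictMonoOn_tanSubTanh (hk : 0 < k) {s : Set ℝ} (hs : Convex ℝ s) (hs0 : s ⊆ Ici 0)
    (hcos : ∀ z ∈ s, cos (k * z) ≠ 0) : StrictMonoOn (tanSubTanh k) s := by
  refine strictMonoOn_of_deriv_pos hs (continuousOn_tanSubTanh hcos) fun x hx => ?_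
  have hx0 : 0 < x := by simpa only [interior_Ici, mem_Ioi] using interior_mono hs0 hx
  rw [(hasDerivAt_tanSubTanh (hcos x (interior_subset hx))).deriv]
  exact deriv_tanSubTanh_pos hk hx0.ne' (hcos x (interior_subset hx))

theorem cos_mul_pos_of_mem_Ico (hk : 0 < k) {z : ℝ} (hz : z ∈ Ico 0 (π / (2 * k))) :
    0 < cos (k * z) := by
  have hz2 := (lt_div_iff₀ (by positivity)).1 hz.2
  apply cos_pos_of_mem_Ioo
  constructor <;> nlinarith [pi_pos, hz.1]

theorem cos_mul_neg_of_mem_Ioo (hk : 0 < k) {z : ℝ} (hz : z ∈ Ioo (π / (2 * k)) (3 * π / (2 * k))) :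
    cos (k * z) < 0 := by
  have hz1 := (div_lt_iff₀ (by positivity)).1 hz.1
  have hz2 := (lt_div_iff₀ (by positivity)).1 hz.2
  apply cos_neg_of_pi_div_two_lt_of_lt <;> linarith

theorem pi_div_mem_Ioo (hk : 0 < k) : π / k ∈ Ioo (π / (2 * k)) (3 * π / (2 * k)) := by
  constructor <;> rw [div_lt_div_iff₀ (by positivity) (by positivity)] <;> nlinarith [pi_pos]

theorem tanSubTanh_zero (k : ℝ) : tanSubTanh k 0 = 0 := by
  simp [tanSubTanh]

theorem tanSubTanh_pi_div_neg (hk : 0 < k) : tanSubTanh k (π / k) < 0 := by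
  rw [tanSubTanh, mul_div_cancel₀ π hk.ne', tan_pi, zero_sub, neg_neg_iff_pos]
  exact mul_pos hk (tanh_pos (by positivity))

theorem tanSubTanh_pi_add_arctan_div_pos (hk : 0 < k) :
    0 < tanSubTanh k ((π + arctan k) / k) := by
  rw [tanSubTanh, mul_div_cancel₀ _ hk.ne', add_comm, tan_add_pi, tan_arctan, sub_pos]
  exact mul_lt_of_lt_one_right hk (tanh_lt_one _)

theorem exists_tanSubTanh_eq_zero (hk : 0 < k) :
    ∃ r ∈ Ioo (π / k) (3 * π / (2 * k)), tanSubTanh k r = 0 := by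
  set b := (π + arctan k) / k
  have hπb : π / k < b := div_lt_div_of_pos_right (by linarith [arctan_pos.2 hk]) hk
  have hb : b < 3 * π / (2 * k) := by
    rw [div_lt_div_iff₀ hk (by positivity)]
    nlinarith [arctan_lt_pi_div_two k]
  have hcos : ∀ z ∈ Icc (π / k) b, cos (k * z) ≠ 0 := fun z hz =>
    (cos_mul_neg_of_mem_Ioo hk ⟨(pi_div_mem_Ioo hk).1.trans_le hz.1, hz.2.trans_lt hb⟩).ne
  obtain ⟨r, hr, hfr⟩ := intermediate_value_Icc hπb.le (continuousOn_tanSubTanh hcos)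
    ⟨(tanSubTanh_pi_div_neg hk).le, (tanSubTanh_pi_add_arctan_div_pos hk).le⟩
  have hrπ : r ≠ π / k := by
    rintro rfl
    exact (tanSubTanh_pi_div_neg hk).ne hfr
  exact ⟨r, ⟨lt_of_le_of_ne hr.1 hrπ.symm, hr.2.trans_lt hb⟩, hfr⟩

end

theorem tan_sub_tanh_properties (k : ℝ) (hk : 0 < k) :
    (∀ x y : ℝ, 0 < x → x < y →
      (∀ z ∈ Set.Icc x y, Real.cos (k * z) ≠ 0) →
      Real.tan (k * x) - k * Real.tanh x < Real.tan (k * y) - k * Real.tanh y) ∧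
    (∀ x ∈ Set.Ioo 0 (Real.pi / (2 * k)), 0 < Real.tan (k * x) - k * Real.tanh x) ∧
    (∀ x ∈ Set.Ioc (Real.pi / (2 * k)) (Real.pi / k), Real.tan (k * x) - k * Real.tanh x < 0) ∧
    (∃! x : ℝ, x ∈ Set.Ioo (Real.pi / k) (3 * Real.pi / (2 * k)) ∧
      Real.tan (k * x) - k * Real.tanh x = 0) := by
  have hπ2k : 0 < π / (2 * k) := by positivity
  have hbranch := strictMonoOn_tanSubTanh hk (convex_Ioo (π / (2 * k)) (3 * π / (2 * k)))
    (fun z hz => (hπ2k.trans hz.1).le) fun z hz => (cos_mul_neg_of_mem_Ioo hk hz).ne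
  have hπk := pi_div_mem_Ioo hk
  refine ⟨fun x y hx hxy hcos => ?_, fun x hx => ?_, fun x hx => ?_, ?_⟩
  · exact strictMonoOn_tanSubTanh hk (convex_Icc x y) (fun z hz => hx.le.trans hz.1) hcos
      (left_mem_Icc.2 hxy.le) (right_mem_Icc.2 hxy.le) hxy
  · have hmono := strictMonoOn_tanSubTanh hk (convex_Ico 0 (π / (2 * k))) (fun z hz => hz.1)
      fun z hz => (cos_mul_pos_of_mem_Ico hk hz).ne'
    have h0x := hmono ⟨le_rfl, hπ2k⟩ (Ioo_subset_Ico_self hx) hx.1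
    rwa [tanSubTanh_zero] at h0x
  · have hx' : x ∈ Ioo (π / (2 * k)) (3 * π / (2 * k)) := ⟨hx.1, hx.2.trans_lt hπk.2⟩
    exact ((hbranch.le_iff_le hx' hπk).2 hx.2).trans_lt (tanSubTanh_pi_div_neg hk)
  · obtain ⟨r, hr, hfr⟩ := exists_tanSubTanh_eq_zero hk
    have hsub : Ioo (π / k) (3 * π / (2 * k)) ⊆ Ioo (π / (2 * k)) (3 * π / (2 * k)) :=
      Ioo_subset_Ioo_left hπk.1.le
    exact ⟨r, ⟨hr, hfr⟩, fun y hy => hbranch.injOn (hsub hy.1) (hsub hr) (hy.2.trans hfr.symm)⟩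
end

section
/- The equation tan(kx) = k·tan(x) with x ∈ (0, π) and x ≠ π/2, kx not an odd multiple of π/2, has no solution when 1 < k ≤ 2 and no solution when k = 3. -/
/-!
Clearing denominators, `tan (k x) = k tan x` becomes `f x = 0` for
`f x = sin (k x) cos x - k sin x cos (k x)`, whose derivative is `(k² - 1) sin x sin (k x)`.
For `1 < k ≤ 2` this makes `f` increase on `[0, π/k]` and decrease on `[π/k, π]`; as `f 0 = 0`
and `f π = -sin (k π) ≥ 0`, `f` is positive on `(0, π)`. For `k = 3` the triple-angle formulas
give `f x = 8 sin³ x cos x`, which vanishes on `(0, π)` only at `π/2`.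
-/

open Real Set

noncomputable def tanDefect (k x : ℝ) : ℝ := sin (k * x) * cos x - k * sin x * cos (k * x)

theorem tan_mul_eq_mul_tan_iff {k x : ℝ} (hx : cos x ≠ 0) (hkx : cos (k * x) ≠ 0) :
    tan (k * x) = k * tan x ↔ tanDefect k x = 0 := by
  rw [tan_eq_sin_div_cos, tan_eq_sin_div_cos, tanDefect, div_eq_iff hkx, sub_eq_zero]
  constructor <;> intro h <;> field_simp at h ⊢ <;> linarith

theorem hasDerivAt_tanDefect (k x : ℝ) :
    HasDerivAt (tanDefect k) ((k ^ 2 - 1) * sin x * sin (k * x)) x := by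
  have hsin := (hasDerivAt_sin (k * x)).comp x ((hasDerivAt_id x).const_mul k)
  have hcos := (hasDerivAt_cos (k * x)).comp x ((hasDerivAt_id x).const_mul k)
  refine ((hsin.mul (hasDerivAt_cos x)).sub
    (((hasDerivAt_sin x).const_mul k).mul hcos)).congr_deriv ?_
  simp only [Function.comp_apply]
  ring

theorem tanDefect_three (x : ℝ) : tanDefect 3 x = 8 * sin x ^ 3 * cos x := by
  rw [tanDefect, sin_three_mul, cos_three_mul]
  linear_combination -12 * sin x * cos x * sin_sq_add_cos_sq x

section

variable {k : ℝ}

theorem strictMonoOn_tanDefect (hk : 1 < k) : StrictMonoOn (tanDefect k) (Icc 0 (π / k)) := by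
  have hk0 : 0 < k := by linarith
  apply strictMonoOn_of_deriv_pos (convex_Icc _ _)
    (fun y _ => (hasDerivAt_tanDefect k y).continuousAt.continuousWithinAt)
  intro y hy
  rw [interior_Icc] at hy
  rw [(hasDerivAt_tanDefect k y).deriv]
  have hky : k * y < π := by rw [← lt_div_iff₀' hk0]; exact hy.2
  have hsin_y : 0 < sin y := sin_pos_of_pos_of_lt_pi hy.1 (hy.2.trans (div_lt_self pi_pos hk))
  have hsin_ky : 0 < sin (k * y) := sin_pos_of_pos_of_lt_pi (mul_pos hk0 hy.1) hky
  have hk_sq : 0 < k ^ 2 - 1 := by nlinarith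
  positivity

theorem strictAntiOn_tanDefect (hk1 : 1 < k) (hk2 : k ≤ 2) :
    StrictAntiOn (tanDefect k) (Icc (π / k) π) := by
  have hk0 : 0 < k := by linarith
  apply strictAntiOn_of_deriv_neg (convex_Icc _ _)
    (fun y _ => (hasDerivAt_tanDefect k y).continuousAt.continuousWithinAt)
  intro y hy
  rw [interior_Icc] at hy
  rw [(hasDerivAt_tanDefect k y).deriv]
  have hky : π < k * y := by rw [← div_lt_iff₀' hk0]; exact hy.1
  have hy_pos : 0 < y := (div_pos pi_pos hk0).trans hy.1
  have hsin_y : 0 < sin y := sin_pos_of_pos_of_lt_pi hy_pos hy.2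
  have hsin_ky : sin (k * y) < 0 := by
    have : k * y ≤ 2 * y := mul_le_mul_of_nonneg_right hk2 hy_pos.le
    rw [← sin_sub_two_pi]
    exact sin_neg_of_neg_of_neg_pi_lt (by linarith [hy.2]) (by linarith)
  have hk_sq : 0 < k ^ 2 - 1 := by nlinarith
  exact mul_neg_of_pos_of_neg (mul_pos hk_sq hsin_y) hsin_ky

theorem tanDefect_pos (hk1 : 1 < k) (hk2 : k ≤ 2) {x : ℝ} (hx : x ∈ Ioo 0 π) :
    0 < tanDefect k x := by
  have hk0 : 0 < k := by linarith
  have hπk : 0 < π / k := div_pos pi_pos hk0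
  rcases le_or_gt x (π / k) with h | h
  · have := strictMonoOn_tanDefect hk1 (left_mem_Icc.2 hπk.le) ⟨hx.1.le, h⟩ hx.1
    simpa [tanDefect] using this
  · have hπ : 0 ≤ tanDefect k π := by
      rw [tanDefect, sin_pi, cos_pi]
      have : sin (k * π) ≤ 0 := by
        rw [← sin_sub_two_pi]
        exact sin_nonpos_of_nonpos_of_neg_pi_le (by nlinarith [pi_pos]) (by nlinarith [pi_pos])
      linarith
    have := strictAntiOn_tanDefect hk1 hk2 ⟨h.le, hx.2.le⟩
      (right_mem_Icc.2 (div_le_self pi_pos.le hk1.le)) hx.2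
    linarith

end

theorem cos_ne_zero_of_mem_Ioo_of_ne_pi_div_two {x : ℝ} (hx : x ∈ Ioo 0 π)
    (hx2 : x ≠ π / 2) : cos x ≠ 0 := fun h =>
  hx2 <| injOn_cos (Ioo_subset_Icc_self hx) ⟨by positivity, by linarith [pi_pos]⟩
    (h.trans cos_pi_div_two.symm)

theorem tan_kx_ne_k_tan_x (k x : ℝ) (hk : (1 < k ∧ k ≤ 2) ∨ k = 3)
    (hx : x ∈ Set.Ioo 0 Real.pi) (hx2 : x ≠ Real.pi / 2)
    (hkx : Real.cos (k * x) ≠ 0) :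
    Real.tan (k * x) ≠ k * Real.tan x := by
  have hcos := cos_ne_zero_of_mem_Ioo_of_ne_pi_div_two hx hx2
  rw [Ne, tan_mul_eq_mul_tan_iff hcos hkx]
  rcases hk with ⟨hk1, hk2⟩ | rfl
  · exact (tanDefect_pos hk1 hk2 hx).ne'
  · rw [tanDefect_three]
    have hsin := (sin_pos_of_pos_of_lt_pi hx.1 hx.2).ne'
    positivity
end

section
/- Let a > 0 and b > 0 with b < a, and define on [0, 2π/b] the function F₁(t) = cosh(t·c/2)·cos(b t/2) + (b/c)·sinh(t·c/2)·sin(b t/2), where c = √(a² − b²). Then F₁(0) = 1, F₁(2π/b) < 0, F₁ is strictly increasing on [0, π/b], strictly decreasing on [π/b, 2π/b], and has a unique root in (π/b, 2π/b). -/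
/-!
With `c = √(a² - b²)` one has `F₁' t = (a² / (2c)) · sinh (t c / 2) · cos (b t / 2)`, since
`b² + c² = a²`. The `sinh` factor is positive for `t > 0`, so the sign of `F₁'` is that of
`cos (b t / 2)`: positive on `(0, π/b)` and negative on `(π/b, 2π/b)`. Moreover
`F₁ (π/b) = (b/c) sinh (π c / (2b)) > 0` and `F₁ (2π/b) = -cosh (π c / b) < 0`, so the
intermediate value theorem and strict monotonicity give exactly one root in `(π/b, 2π/b)`.
-/

open Real Set

theorem StrictAntiOn.existsUnique_mem_Ioo_eq {f : ℝ → ℝ} {x y v : ℝ} (hxy : x ≤ y)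
    (hcont : ContinuousOn f (Icc x y)) (hanti : StrictAntiOn f (Icc x y))
    (hv : v ∈ Ioo (f y) (f x)) : ∃! t, t ∈ Ioo x y ∧ f t = v := by
  obtain ⟨t, ht, hft⟩ := intermediate_value_Ioo' hxy hcont hv
  exact ⟨t, ⟨ht, hft⟩, fun s ⟨hs, hfs⟩ =>
    hanti.injOn (Ioo_subset_Icc_self hs) (Ioo_subset_Icc_self ht) (hfs.trans hft.symm)⟩

noncomputable def cutFun (b c t : ℝ) : ℝ :=
  cosh (t * c / 2) * cos (b * t / 2) + b / c * sinh (t * c / 2) * sin (b * t / 2)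

section cutFun

variable {b c : ℝ}

theorem continuous_cutFun (b c : ℝ) : Continuous (cutFun b c) := by
  unfold cutFun
  fun_prop

theorem hasDerivAt_cutFun (b : ℝ) (hc : c ≠ 0) (t : ℝ) :
    HasDerivAt (cutFun b c)
      ((b ^ 2 + c ^ 2) / (2 * c) * (sinh (t * c / 2) * cos (b * t / 2))) t := by
  have hlin (k : ℝ) : HasDerivAt (fun t : ℝ => k * t / 2) (k / 2) t := by
    simpa using ((hasDerivAt_id t).const_mul k).div_const 2
  have hlin' : HasDerivAt (fun t : ℝ => t * c / 2) (c / 2) t := by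
    simpa only [mul_comm] using hlin c
  refine ((hlin'.cosh.mul (hlin b).cos).add
    ((hlin'.sinh.const_mul (b / c)).mul (hlin b).sin)).congr_deriv ?_
  field_simp
  ring

theorem cutFun_zero (b c : ℝ) : cutFun b c 0 = 1 := by
  simp [cutFun]

theorem cutFun_pi_div (hb : b ≠ 0) (c : ℝ) :
    cutFun b c (π / b) = b / c * sinh (π / b * c / 2) := by
  have hcos : b * (π / b) / 2 = π / 2 := by field_simp
  simp [cutFun, hcos]

theorem cutFun_two_pi_div (hb : b ≠ 0) (c : ℝ) :
    cutFun b c (2 * π / b) = -cosh (2 * π / b * c / 2) := by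
  have hcos : b * (2 * π / b) / 2 = π := by field_simp
  simp [cutFun, hcos]

theorem strictMonoOn_cutFun (hb : 0 < b) (hc : 0 < c) :
    StrictMonoOn (cutFun b c) (Icc 0 (π / b)) := by
  refine strictMonoOn_of_deriv_pos (convex_Icc _ _) (continuous_cutFun b c).continuousOn
    fun t ht => ?_
  rw [interior_Icc] at ht
  have hbt : b * t < π := (lt_div_iff₀' hb).mp ht.2
  have hsinh : 0 < sinh (t * c / 2) := sinh_pos_iff.mpr (by have := ht.1; positivity)
  have hcos : 0 < cos (b * t / 2) :=
    cos_pos_of_mem_Ioo ⟨by nlinarith [pi_pos, ht.1], by linarith⟩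
  rw [(hasDerivAt_cutFun b hc.ne' t).deriv]
  positivity

theorem strictAntiOn_cutFun (hb : 0 < b) (hc : 0 < c) :
    StrictAntiOn (cutFun b c) (Icc (π / b) (2 * π / b)) := by
  refine strictAntiOn_of_deriv_neg (convex_Icc _ _) (continuous_cutFun b c).continuousOn
    fun t ht => ?_
  rw [interior_Icc] at ht
  have hbt₁ : π < b * t := (div_lt_iff₀' hb).mp ht.1
  have hbt₂ : b * t < 2 * π := (lt_div_iff₀' hb).mp ht.2
  have hsinh : 0 < sinh (t * c / 2) :=
    sinh_pos_iff.mpr (by have := (div_pos pi_pos hb).trans ht.1; positivity)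
  have hcos : cos (b * t / 2) < 0 :=
    cos_neg_of_pi_div_two_lt_of_lt (by linarith) (by linarith [pi_pos])
  rw [(hasDerivAt_cutFun b hc.ne' t).deriv]
  exact mul_neg_of_pos_of_neg (by positivity) (mul_neg_of_pos_of_neg hsinh hcos)

end cutFun

theorem F1_properties_general (a b : ℝ) (hb : 0 < b) (hba : b < a) :
    let c := Real.sqrt (a ^ 2 - b ^ 2)
    let F₁ := fun t : ℝ =>
      Real.cosh (t * c / 2) * Real.cos (b * t / 2) +
        (b / c) * Real.sinh (t * c / 2) * Real.sin (b * t / 2)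
    F₁ 0 = 1 ∧ F₁ (2 * Real.pi / b) < 0 ∧
    StrictMonoOn F₁ (Set.Icc 0 (Real.pi / b)) ∧
    StrictAntiOn F₁ (Set.Icc (Real.pi / b) (2 * Real.pi / b)) ∧
    ∃! t : ℝ, t ∈ Set.Ioo (Real.pi / b) (2 * Real.pi / b) ∧ F₁ t = 0 := by
  intro c F₁
  rw [show F₁ = cutFun b c from rfl]
  have hc : 0 < c := sqrt_pos.mpr (by nlinarith)
  have hleft : 0 < cutFun b c (π / b) := by
    rw [cutFun_pi_div hb.ne']
    have := sinh_pos_iff.mpr (by positivity : 0 < π / b * c / 2)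
    positivity
  have hright : cutFun b c (2 * π / b) < 0 := by
    rw [cutFun_two_pi_div hb.ne', neg_lt_zero]
    exact cosh_pos _
  have hpi : π / b ≤ 2 * π / b := by gcongr; linarith [pi_pos]
  refine ⟨cutFun_zero b c, hright, strictMonoOn_cutFun hb hc, strictAntiOn_cutFun hb hc,
    (strictAntiOn_cutFun hb hc).existsUnique_mem_Ioo_eq hpi
      (continuous_cutFun b c).continuousOn ⟨hright, hleft⟩⟩

theorem F1_properties (a b : ℝ) (ha : 0 < a) (hb : 0 < b) (hba : b < a) :
    let c := Real.sqrt (a ^ 2 - b ^ 2)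
    let F₁ := fun t : ℝ =>
      Real.cosh (t * c / 2) * Real.cos (b * t / 2) +
        (b / c) * Real.sinh (t * c / 2) * Real.sin (b * t / 2)
    F₁ 0 = 1 ∧ F₁ (2 * Real.pi / b) < 0 ∧
    StrictMonoOn F₁ (Set.Icc 0 (Real.pi / b)) ∧
    StrictAntiOn F₁ (Set.Icc (Real.pi / b) (2 * Real.pi / b)) ∧
    ∃! t : ℝ, t ∈ Set.Ioo (Real.pi / b) (2 * Real.pi / b) ∧ F₁ t = 0 :=
  F1_properties_general a b hb hba
end

section
/- Let α₂ ∈ (−1,1) and w = √(β²+α₂²−1) > 0. The range of the function v(α₂, β) = 2α₂π/w, as (α₂, β) ranges over pairs with α₂ ∈ (−1,1) and β² + α₂² > 1, is all of ℝ, while the range of f(α₂, β) = βπ/w on the same domain is ℝ \ [−π, π]. -/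
open Real

theorem ranges_of_conjugate_point_functions :
    {y : ℝ | ∃ α₂ β : ℝ, α₂ ∈ Set.Ioo (-1 : ℝ) 1 ∧ 1 < β ^ 2 + α₂ ^ 2 ∧
      y = 2 * α₂ * Real.pi / Real.sqrt (β ^ 2 + α₂ ^ 2 - 1)} = Set.univ ∧
    {y : ℝ | ∃ α₂ β : ℝ, α₂ ∈ Set.Ioo (-1 : ℝ) 1 ∧ 1 < β ^ 2 + α₂ ^ 2 ∧
      y = β * Real.pi / Real.sqrt (β ^ 2 + α₂ ^ 2 - 1)} =
      (Set.Icc (-Real.pi) Real.pi)ᶜ := by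
  have hπ := Real.pi_pos
  constructor
  · ext y
    simp only [Set.mem_setOf_eq, Set.mem_univ, iff_true]
    rcases eq_or_ne y 0 with rfl | hy
    · exact ⟨0, 2, ⟨by norm_num, by norm_num⟩, by norm_num, by norm_num⟩
    · have hy2 : (0:ℝ) < y^2 := by positivity
      set β := Real.sqrt (π^2 / y^2 + 3/4) with hβ
      have hβ2 : β^2 = π^2/y^2 + 3/4 := Real.sq_sqrt (by positivity)
      have hkey : Real.sqrt (β^2 + (1/2:ℝ)^2 - 1) = π / |y| := by
        have h1 : β^2 + (1/2:ℝ)^2 - 1 = (π/|y|)^2 := by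
          have h2 : (π/|y|)^2 = π^2/y^2 := by rw [div_pow, sq_abs]
          rw [hβ2, h2]; ring
        rw [h1, Real.sqrt_sq (by positivity)]
      have hgt : ∀ a : ℝ, a^2 = (1/2:ℝ)^2 → 1 < β^2 + a^2 := by
        intro a ha
        rw [hβ2, ha]
        have := div_pos (by positivity : (0:ℝ) < π^2) hy2
        nlinarith
      rcases hy.lt_or_gt with h | h
      · refine ⟨-(1/2), β, ⟨by norm_num, by norm_num⟩, hgt _ (by norm_num), ?_⟩
        have h2 : β ^ 2 + (-(1/2):ℝ) ^ 2 - 1 = β^2 + (1/2:ℝ)^2 - 1 := by ring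
        rw [h2, hkey, abs_of_neg h]
        field_simp
      · refine ⟨1/2, β, ⟨by norm_num, by norm_num⟩, hgt _ (by norm_num), ?_⟩
        rw [hkey, abs_of_pos h]
        field_simp
  · ext y
    simp only [Set.mem_setOf_eq, Set.mem_compl_iff, Set.mem_Icc, not_and_or, not_le]
    constructor
    · rintro ⟨α₂, β, ⟨h1, h2⟩, hs, rfl⟩
      have hw0 : 0 < β^2 + α₂^2 - 1 := by linarith
      have hw : 0 < Real.sqrt (β^2+α₂^2-1) := Real.sqrt_pos.mpr hw0
      have hβw : Real.sqrt (β^2+α₂^2-1) < |β| := by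
        have hlt : β^2 + α₂^2 - 1 < β^2 := by nlinarith
        calc Real.sqrt (β^2+α₂^2-1) < Real.sqrt (β^2) := Real.sqrt_lt_sqrt hw0.le hlt
          _ = |β| := Real.sqrt_sq_eq_abs β
      have habs : π < |β * π / Real.sqrt (β^2+α₂^2-1)| := by
        rw [abs_div, abs_mul, abs_of_pos hπ, abs_of_pos hw, lt_div_iff₀ hw]
        nlinarith
      rcases lt_abs.mp habs with h | h
      · right; exact h
      · left; linarith
    · intro h
      have hy2 : π^2 < y^2 := by rcases h with h|h <;> nlinarith
      have ht0 : 0 < y^2 - π^2 := by linarith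
      set t := Real.sqrt (y^2 - π^2) with htdef
      have ht : 0 < t := Real.sqrt_pos.mpr ht0
      have ht2 : t^2 = y^2 - π^2 := Real.sq_sqrt ht0.le
      refine ⟨0, y/t, ⟨by norm_num, by norm_num⟩, ?_, ?_⟩
      · have h1 : (y/t)^2 + (0:ℝ)^2 = y^2/(y^2-π^2) := by rw [div_pow, ht2]; ring
        rw [h1, lt_div_iff₀ ht0]
        nlinarith
      · have h1 : (y/t)^2 + (0:ℝ)^2 - 1 = (π/t)^2 := by
          field_simp
          nlinarith
        rw [h1, Real.sqrt_sq (by positivity)]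
        field_simp
end
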